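/- arXiv:2010.14857 — 3 statements merged into one kernel-verified Lean document; each statement's English description precedes it below -/
import Mathlib

section
/- The intrinsic frontier of ℋ, namely {A ∈ ℋ : det A = 0}, equals the union, taken over all Hermitian matrices P ∈ HM(3) with P·P = P and tr P = 2 (rank-two orthogonal projections), of the sets {A ∈ HM(3) : A positive semidefinite, tr A = 1, P·A = A}; i.e. the boundary of ℋ is the union of the unit 3-balls enclosed by the complex projective lines of CP². -/
open Matrix ComplexOrder

/-!
A singular positive semidefinite `A` has a nonzero vector `v` in its kernel. Since `A` is
Hermitian, `v` is also orthogonal to the range of `A`, so the projection `P = 1 - v vᴴ / (vᴴ v)`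
onto `v⊥` is a rank-two projection with `P A = A`. Conversely, `P A = A` with `A` invertible
forces `P = 1`, whose trace is `3`, not `2`.
-/

namespace Matrix

variable {n 𝕜 : Type*} [Fintype n]

section Field

variable [Field 𝕜] [StarRing 𝕜]

/-- The orthogonal projection onto the line spanned by `v`, when `star v ⬝ᵥ v ≠ 0`. -/
noncomputable def projSpan (v : n → 𝕜) : Matrix n n 𝕜 :=
  (star v ⬝ᵥ v)⁻¹ • vecMulVec v (star v)

theorem isHermitian_projSpan (v : n → 𝕜) : (projSpan v).IsHermitian := by
  have hself : star (star v ⬝ᵥ v) = star v ⬝ᵥ v := by rw [← star_dotProduct]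
  rw [IsHermitian, projSpan, conjTranspose_smul, conjTranspose_vecMulVec, star_inv₀, hself,
    star_star]

theorem projSpan_mul_self {v : n → 𝕜} (hv : star v ⬝ᵥ v ≠ 0) :
    projSpan v * projSpan v = projSpan v := by
  rw [projSpan, smul_mul_smul_comm, vecMulVec_mul_vecMulVec, vecMulVec_smul, smul_smul,
    mul_assoc, inv_mul_cancel₀ hv, mul_one]

theorem trace_projSpan {v : n → 𝕜} (hv : star v ⬝ᵥ v ≠ 0) : (projSpan v).trace = 1 := by
  rw [projSpan, trace_smul, trace_vecMulVec, dotProduct_comm v, smul_eq_mul, inv_mul_cancel₀ hv]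

theorem projSpan_mul_eq_zero {A : Matrix n n 𝕜} (hA : A.IsHermitian) {v : n → 𝕜}
    (hAv : A *ᵥ v = 0) : projSpan v * A = 0 := by
  have hvA : star v ᵥ* A = 0 := by rw [← hA.eq, ← star_mulVec, hAv, star_zero]
  rw [projSpan, smul_mul, vecMulVec_mul, hvA, vecMulVec_zero, smul_zero]

end Field

theorem exists_projection_mul_eq_self_of_det_eq_zero [Field 𝕜] [PartialOrder 𝕜] [StarRing 𝕜]
    [StarOrderedRing 𝕜] [DecidableEq n] {A : Matrix n n 𝕜} (hA : A.IsHermitian)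
    (hdet : A.det = 0) :
    ∃ P : Matrix n n 𝕜, P.IsHermitian ∧ P * P = P ∧ P.trace = Fintype.card n - 1 ∧ P * A = A := by
  obtain ⟨v, hv, hAv⟩ := exists_mulVec_eq_zero_iff.mpr hdet
  have hvv : star v ⬝ᵥ v ≠ 0 := dotProduct_star_self_eq_zero.not.mpr hv
  refine ⟨1 - projSpan v, isHermitian_one.sub (isHermitian_projSpan v),
    (IsIdempotentElem.one_sub (projSpan_mul_self hvv)).eq, ?_, ?_⟩
  · rw [trace_sub, trace_one, trace_projSpan hvv]
  · rw [sub_mul, one_mul, projSpan_mul_eq_zero hA hAv, sub_zero]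

theorem det_eq_zero_of_mul_eq_self [Field 𝕜] [DecidableEq n] {P A : Matrix n n 𝕜} (hP : P ≠ 1)
    (hPA : P * A = A) : A.det = 0 := by
  by_contra hdet
  exact hP (((isUnit_iff_isUnit_det A).mpr (Ne.isUnit hdet)).mul_eq_right.mp hPA)

end Matrix

/-- The intrinsic frontier `{A ∈ ℋ : det A = 0}` of `ℋ` is the union, over all rank-two
Hermitian orthogonal projections `P` (`P·P = P`, `tr P = 2`), of the unit 3-balls
`{A : A.PosSemidef, tr A = 1, P·A = A}` enclosed by the complex projective lines of `CP²`. -/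
theorem frontier_H_eq_union_balls :
    {A : Matrix (Fin 3) (Fin 3) ℂ | (A.PosSemidef ∧ A.trace = 1) ∧ A.det = 0} =
      ⋃ P ∈ {P : Matrix (Fin 3) (Fin 3) ℂ | P.IsHermitian ∧ P * P = P ∧ P.trace = 2},
        {A : Matrix (Fin 3) (Fin 3) ℂ | A.PosSemidef ∧ A.trace = 1 ∧ P * A = A} := by
  ext A
  simp only [Set.mem_ofPred_eq, Set.mem_iUnion, exists_prop]
  constructor
  · rintro ⟨⟨hA, htr⟩, hdet⟩
    obtain ⟨P, hPH, hPP, hPtr, hPA⟩ :=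
      exists_projection_mul_eq_self_of_det_eq_zero hA.isHermitian hdet
    refine ⟨P, ⟨hPH, hPP, ?_⟩, hA, htr, hPA⟩
    rw [hPtr, Fintype.card_fin]
    norm_num
  · rintro ⟨P, ⟨-, -, hPtr⟩, hA, htr, hPA⟩
    refine ⟨⟨hA, htr⟩, det_eq_zero_of_mul_eq_self ?_ hPA⟩
    rintro rfl
    norm_num [trace_one] at hPtr
end

section
/- Every positive semidefinite 3×3 complex Hermitian matrix Q with tr Q = 1 and det Q = 0 satisfies 2 tr((Q − (1/3)I)²) ≥ 1/3, and equality is attained (for instance by Q = diag(0, 1/2, 1/2)). Consequently, in the Euclidean norm ‖X‖² = 2 tr(X²) on HM(3), the distance from the point (1/3)I to the intrinsic frontier of ℋ equals √3/3. -/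
open Matrix ComplexOrder

/-!
The eigenvalues `λᵢ` of `Q` are real, sum to `tr Q = 1`, and one of them vanishes because
`det Q = 0`. Conjugating by the eigenvector unitary, `2 tr((Q - I/3)²) = 2 ∑ (λᵢ - 1/3)² =
2 ∑ λᵢ² - 2/3`, and Cauchy–Schwarz on the two remaining eigenvalues gives `∑ λᵢ² ≥ 1/2`.
-/

namespace Matrix.IsHermitian

variable {𝕜 n : Type*} [RCLike 𝕜] [Fintype n] [DecidableEq n] {A : Matrix n n 𝕜}

theorem trace_sub_smul_one_pow (hA : A.IsHermitian) (c : ℝ) (k : ℕ) :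
    ((A - (c : 𝕜) • 1) ^ k).trace = ∑ i, ((hA.eigenvalues i - c : ℝ) : 𝕜) ^ k := by
  set U := hA.eigenvectorUnitary
  have hshift : A - (c : 𝕜) • 1 = Unitary.conjStarAlgAut 𝕜 _ U
      (diagonal fun i ↦ ((hA.eigenvalues i - c : ℝ) : 𝕜)) := by
    conv_lhs => rw [hA.spectral_theorem, ← map_one (Unitary.conjStarAlgAut 𝕜 _ U), ← map_smul,
      ← map_sub]
    congr 1
    ext i j
    by_cases h : i = j <;> simp [h, Algebra.algebraMap_eq_smul_one, sub_smul]
  rw [hshift, ← map_pow, Unitary.conjStarAlgAut_apply, trace_mul_cycle, Unitary.coe_star_mul_self,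
    Matrix.one_mul, diagonal_pow, trace_diagonal]
  rfl

theorem exists_eigenvalues_eq_zero (hA : A.IsHermitian) (hdet : A.det = 0) :
    ∃ i, hA.eigenvalues i = 0 := by
  simpa [hA.det_eq_prod_eigenvalues, Finset.prod_eq_zero_iff] using hdet

end Matrix.IsHermitian

theorem one_le_card_sub_one_mul_sum_sq {ι : Type*} [Fintype ι] [DecidableEq ι] {x : ι → ℝ}
    (hsum : ∑ i, x i = 1) {j : ι} (hj : x j = 0) :
    1 ≤ ((Fintype.card ι : ℝ) - 1) * ∑ i, x i ^ 2 := by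
  have hsum' : ∑ i ∈ Finset.univ.erase j, x i = 1 := by
    rw [Finset.sum_erase _ hj, hsum]
  calc 1 = (∑ i ∈ Finset.univ.erase j, x i) ^ 2 := by rw [hsum', one_pow]
    _ ≤ (Finset.univ.erase j).card * ∑ i ∈ Finset.univ.erase j, x i ^ 2 :=
      sq_sum_le_card_mul_sum_sq
    _ = ((Fintype.card ι : ℝ) - 1) * ∑ i, x i ^ 2 := by
      rw [Finset.sum_erase _ (by simp [hj]), Finset.card_erase_of_mem (Finset.mem_univ j),
        Finset.card_univ, Nat.cast_sub (Fintype.card_pos_iff.mpr ⟨j⟩)]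
      simp

theorem one_third_le_two_mul_trace_sub_third_sq (Q : Matrix (Fin 3) (Fin 3) ℂ)
    (hQ : Q.IsHermitian) (htr : Q.trace = 1) (hdet : Q.det = 0) :
    1 / 3 ≤ (2 * ((Q - (1 / 3 : ℂ) • 1) ^ 2).trace).re := by
  obtain ⟨j, hj⟩ := hQ.exists_eigenvalues_eq_zero hdet
  have hsum : ∑ i, hQ.eigenvalues i = 1 := by
    have h := hQ.trace_eq_sum_eigenvalues.symm.trans htr
    simp only [Complex.coe_algebraMap] at h
    exact_mod_cast h
  have hsq := one_le_card_sub_one_mul_sum_sq hsum hj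
  have htrace := hQ.trace_sub_smul_one_pow (1 / 3) 2
  push_cast at htrace
  rw [htrace]
  simp only [Fin.sum_univ_three] at hsum hsq ⊢
  norm_num [sq] at hsq ⊢
  linarith

/-- Every positive semidefinite 3×3 complex Hermitian matrix `Q` with `tr Q = 1` and
`det Q = 0` satisfies `2 tr((Q − (1/3)I)²) ≥ 1/3`, equality being attained by
`Q = diag(0, 1/2, 1/2)`.  Consequently, in the Euclidean norm `‖X‖² = 2 tr(X²)` on the
Hermitian matrices, the distance from `(1/3)I` to the intrinsic frontier of `ℋ`
equals `√3/3` (stated as: `√3/3` is the least value of the distance function). -/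
theorem dist_center_to_frontier :
    (∀ Q : Matrix (Fin 3) (Fin 3) ℂ, Q.PosSemidef → Q.trace = 1 → Q.det = 0 →
      (2 * (((Q - (1/3 : ℂ) • 1) ^ 2).trace)).re ≥ 1/3) ∧
    ((Matrix.diagonal ![0, 1/2, 1/2] : Matrix (Fin 3) (Fin 3) ℂ).PosSemidef ∧
      (Matrix.diagonal ![0, 1/2, 1/2] : Matrix (Fin 3) (Fin 3) ℂ).trace = 1 ∧
      (Matrix.diagonal ![0, 1/2, 1/2] : Matrix (Fin 3) (Fin 3) ℂ).det = 0 ∧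
      (2 * ((((Matrix.diagonal ![0, 1/2, 1/2] : Matrix (Fin 3) (Fin 3) ℂ) -
        (1/3 : ℂ) • 1) ^ 2).trace)).re = 1/3) ∧
    IsLeast {d : ℝ | ∃ Q : Matrix (Fin 3) (Fin 3) ℂ,
        Q.PosSemidef ∧ Q.trace = 1 ∧ Q.det = 0 ∧
        d = Real.sqrt ((2 * (((Q - (1/3 : ℂ) • 1) ^ 2).trace)).re)}
      (Real.sqrt 3 / 3) := by
  have hbound Q (hQ : Q.PosSemidef) := one_third_le_two_mul_trace_sub_third_sq Q hQ.1
  set D : Matrix (Fin 3) (Fin 3) ℂ := diagonal ![0, 1/2, 1/2]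
  have hpsd : D.PosSemidef :=
    PosSemidef.diagonal fun i ↦ by fin_cases i <;> norm_num [Complex.le_def]
  have htr : D.trace = 1 := by
    norm_num [D, trace_diagonal, Fin.sum_univ_three, Matrix.cons_val_two]
  have hdet : D.det = 0 := by simp [D, det_diagonal, Fin.prod_univ_three]
  have hval : (2 * ((D - (1/3 : ℂ) • 1) ^ 2).trace).re = 1/3 := by
    norm_num [D, smul_one_eq_diagonal, diagonal_sub, diagonal_pow, trace_diagonal,
      Fin.sum_univ_three, Matrix.cons_val_two]
  have hsqrt : Real.sqrt (1/3) = Real.sqrt 3 / 3 := by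
    rw [Real.sqrt_div_self, one_div, Real.sqrt_inv]
  refine ⟨hbound, ⟨hpsd, htr, hdet, hval⟩, ⟨D, hpsd, htr, hdet, by rw [hval, hsqrt]⟩, ?_⟩
  rintro d ⟨Q, hQ, hQtr, hQdet, rfl⟩
  rw [← hsqrt]
  exact Real.sqrt_le_sqrt (hbound Q hQ hQtr hQdet)
end

section
/- For every real number a one has 3a² − 3a + 1 > 0 and 24·(7a² − 4a + 1)/(3a² − 3a + 1) ≥ 16·(4 − √7), with equality if and only if a = (4 − √7)/9. Equivalently, the function F(a) = 24π·(7a² − 4a + 1)/(3a² − 3a + 1) attains its minimum over ℝ exactly at a₁ = (4 − √7)/9, and F(a₁) = 16(4 − √7)π. -/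
/-!
Subtracting `m = 16(4 - √7)` from the ratio and clearing the positive denominator leaves the
numerator `24(7a² - 4a + 1) - m(3a² - 3a + 1) = 24(2√7 - 1)(a - a₁)²`, a perfect square times a
positive constant. The value `m` is the smaller root of `m² - 128m + 2304`, the condition for the
quadratic `24(7a² - 4a + 1) - m(3a² - 3a + 1)` in `a` to have a double root.
-/

theorem le_div_of_sub_mul_eq_mul_sq {p q m c x x₀ : ℝ} (hq : 0 < q) (hc : 0 ≤ c)
    (h : p - m * q = c * (x - x₀) ^ 2) : m ≤ p / q := by
  rw [le_div_iff₀ hq]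
  nlinarith [mul_nonneg hc (sq_nonneg (x - x₀))]

theorem div_eq_iff_of_sub_mul_eq_mul_sq {p q m c x x₀ : ℝ} (hq : q ≠ 0) (hc : c ≠ 0)
    (h : p - m * q = c * (x - x₀) ^ 2) : p / q = m ↔ x = x₀ := by
  rw [div_eq_iff hq, ← sub_eq_zero, h, mul_eq_zero, or_iff_right hc,
    pow_eq_zero_iff two_ne_zero, sub_eq_zero]

theorem three_mul_sq_sub_three_mul_add_one_pos (a : ℝ) : 0 < 3 * a ^ 2 - 3 * a + 1 := by
  nlinarith [sq_nonneg (2 * a - 1)]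

theorem energy_sub_min_mul_eq_sq (a : ℝ) :
    24 * (7 * a ^ 2 - 4 * a + 1) - 16 * (4 - √7) * (3 * a ^ 2 - 3 * a + 1) =
      24 * (2 * √7 - 1) * (a - (4 - √7) / 9) ^ 2 := by
  linear_combination
    (-(48 * √7 + 864 * a - 408) / 81) * Real.sq_sqrt (show (0 : ℝ) ≤ 7 by norm_num)

theorem two_mul_sqrt_seven_sub_one_pos : 0 < 2 * √7 - 1 := by
  have : (1 : ℝ) < √7 := Real.lt_sqrt zero_le_one |>.2 (by norm_num)
  linarith

/-- For every real `a` one has `3a² − 3a + 1 > 0` and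
`24·(7a² − 4a + 1)/(3a² − 3a + 1) ≥ 16·(4 − √7)`, with equality iff `a = (4 − √7)/9`.
Equivalently, `F(a) = 24π·(7a² − 4a + 1)/(3a² − 3a + 1)` attains its minimum over `ℝ`
exactly at `a₁ = (4 − √7)/9`, with `F(a₁) = 16(4 − √7)π`. -/
theorem claim_minimum_F :
    (∀ a : ℝ, 3 * a ^ 2 - 3 * a + 1 > 0) ∧
    (∀ a : ℝ, 24 * (7 * a ^ 2 - 4 * a + 1) / (3 * a ^ 2 - 3 * a + 1) ≥
      16 * (4 - Real.sqrt 7)) ∧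
    (∀ a : ℝ, 24 * (7 * a ^ 2 - 4 * a + 1) / (3 * a ^ 2 - 3 * a + 1) =
        16 * (4 - Real.sqrt 7) ↔ a = (4 - Real.sqrt 7) / 9) ∧
    (∀ a : ℝ,
      24 * Real.pi * (7 * a ^ 2 - 4 * a + 1) / (3 * a ^ 2 - 3 * a + 1) ≥
        16 * (4 - Real.sqrt 7) * Real.pi) ∧
    (∀ a : ℝ,
      24 * Real.pi * (7 * a ^ 2 - 4 * a + 1) / (3 * a ^ 2 - 3 * a + 1) =
          16 * (4 - Real.sqrt 7) * Real.pi ↔ a = (4 - Real.sqrt 7) / 9) := by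
  have hq := three_mul_sq_sub_three_mul_add_one_pos
  have hc : 0 < 24 * (2 * √7 - 1) := by linarith [two_mul_sqrt_seven_sub_one_pos]
  have hπc : 0 < 24 * (2 * √7 - 1) * Real.pi := by positivity
  refine ⟨hq, fun a => ?_, fun a => ?_, fun a => ?_, fun a => ?_⟩
  · exact le_div_of_sub_mul_eq_mul_sq (hq a) hc.le (energy_sub_min_mul_eq_sq a)
  · exact div_eq_iff_of_sub_mul_eq_mul_sq (hq a).ne' hc.ne' (energy_sub_min_mul_eq_sq a)
  · exact le_div_of_sub_mul_eq_mul_sq (hq a) hπc.le (x := a) (x₀ := (4 - √7) / 9)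
      (by linear_combination Real.pi * energy_sub_min_mul_eq_sq a)
  · exact div_eq_iff_of_sub_mul_eq_mul_sq (hq a).ne' hπc.ne' (x := a) (x₀ := (4 - √7) / 9)
      (by linear_combination Real.pi * energy_sub_min_mul_eq_sq a)
end
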